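/- For finite discrete random variables X and Y with joint distribution p(x,y) having full-support marginals, the CLUB quantity I_CLUB(X;Y) := E_{p(x,y)}[log p(y|x)] − E_{p(x)}E_{p(y)}[log p(y|x)] satisfies I(X;Y) ≤ I_CLUB(X;Y); more precisely, I_CLUB(X;Y) − I(X;Y) equals the Kullback–Leibler divergence KL(p(x)·p(y) ‖ p(x,y)), and equality I = I_CLUB holds if and only if X and Y are independent. -/

import Mathlib

/-!
Writing `q(x,y) = p(x) p(y)`, one has `log p(y|x) = log p(x,y) - log p(x)`, so pointwise the
integrand of `I_CLUB - I - KL(q ‖ p)` collapses to `(p(x,y) - q(x,y)) · log p(y)`, whose sum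
vanishes because `p` and `q` have the same `Y`-marginal. Gibbs' inequality, in the form
`a log (a / b) = b · klFun (a / b) + (a - b)` with `klFun ≥ 0` vanishing only at `1`, then gives
`KL ≥ 0` with equality exactly when `q = p`.
-/

open Real InformationTheory

theorem mul_log_div_eq_mul_klFun_add_sub {a b : ℝ} (hb : b ≠ 0) :
    a * log (a / b) = b * klFun (a / b) + (a - b) := by
  rw [klFun_apply]
  field_simp
  ring

section Gibbs

variable {ι : Type*} {s : Finset ι} {a b : ι → ℝ}

theorem Finset.sum_mul_log_div_eq_sum_mul_klFun (hb : ∀ i ∈ s, 0 < b i)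
    (hsum : ∑ i ∈ s, a i = ∑ i ∈ s, b i) :
    ∑ i ∈ s, a i * log (a i / b i) = ∑ i ∈ s, b i * klFun (a i / b i) := by
  rw [Finset.sum_congr rfl fun i hi => mul_log_div_eq_mul_klFun_add_sub (hb i hi).ne',
    Finset.sum_add_distrib, Finset.sum_sub_distrib, hsum, sub_self, add_zero]

theorem Finset.sum_mul_log_div_nonneg (ha : ∀ i ∈ s, 0 ≤ a i) (hb : ∀ i ∈ s, 0 < b i)
    (hsum : ∑ i ∈ s, a i = ∑ i ∈ s, b i) :
    0 ≤ ∑ i ∈ s, a i * log (a i / b i) := by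
  rw [Finset.sum_mul_log_div_eq_sum_mul_klFun hb hsum]
  exact Finset.sum_nonneg fun i hi =>
    mul_nonneg (hb i hi).le (klFun_nonneg (div_nonneg (ha i hi) (hb i hi).le))

theorem Finset.sum_mul_log_div_eq_zero_iff (ha : ∀ i ∈ s, 0 ≤ a i) (hb : ∀ i ∈ s, 0 < b i)
    (hsum : ∑ i ∈ s, a i = ∑ i ∈ s, b i) :
    ∑ i ∈ s, a i * log (a i / b i) = 0 ↔ ∀ i ∈ s, a i = b i := by
  have hterm : ∀ i ∈ s, 0 ≤ b i * klFun (a i / b i) := fun i hi =>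
    mul_nonneg (hb i hi).le (klFun_nonneg (div_nonneg (ha i hi) (hb i hi).le))
  rw [Finset.sum_mul_log_div_eq_sum_mul_klFun hb hsum, Finset.sum_eq_zero_iff_of_nonneg hterm]
  refine forall₂_congr fun i hi => ?_
  rw [mul_eq_zero_iff_left (hb i hi).ne', klFun_eq_zero_iff (div_nonneg (ha i hi) (hb i hi).le),
    div_eq_one_iff_eq (hb i hi).ne']

end Gibbs

section Marginals

variable {X Y : Type*} [Fintype X] [Fintype Y] {p : X × Y → ℝ} {px : X → ℝ} {py : Y → ℝ}

theorem sum_mul_comp_snd_eq_of_marginal (hpx_sum : ∑ x, px x = 1)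
    (hpy : ∀ y, py y = ∑ x, p (x, y)) (f : Y → ℝ) :
    ∑ z : X × Y, p z * f z.2 = ∑ z : X × Y, px z.1 * py z.2 * f z.2 := by
  simp_rw [Fintype.sum_prod_type_right, mul_assoc, ← Finset.sum_mul, hpx_sum, one_mul, hpy]

theorem club_sub_mutualInfo_eq_kl (hp_pos : ∀ z, 0 < p z) (hpx_pos : ∀ x, 0 < px x)
    (hpy_pos : ∀ y, 0 < py y) (hpx_sum : ∑ x, px x = 1) (hpy : ∀ y, py y = ∑ x, p (x, y)) :
    ((∑ z, p z * log (p z / px z.1)) - ∑ z, px z.1 * py z.2 * log (p z / px z.1)) -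
        ∑ z, p z * log (p z / (px z.1 * py z.2)) =
      ∑ z, px z.1 * py z.2 * log (px z.1 * py z.2 / p z) := by
  have hpointwise : ∀ z : X × Y,
      p z * log (p z / px z.1) - px z.1 * py z.2 * log (p z / px z.1)
          - p z * log (p z / (px z.1 * py z.2))
          - px z.1 * py z.2 * log (px z.1 * py z.2 / p z) =
        p z * log (py z.2) - px z.1 * py z.2 * log (py z.2) := by
    intro z
    have hp := (hp_pos z).ne'
    have hx := (hpx_pos z.1).ne'
    have hy := (hpy_pos z.2).ne'
    rw [log_div hp hx, log_div hp (mul_ne_zero hx hy), log_div (mul_ne_zero hx hy) hp,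
      log_mul hx hy]
    ring
  rw [← sub_eq_zero, ← Finset.sum_sub_distrib, ← Finset.sum_sub_distrib,
    ← Finset.sum_sub_distrib, Finset.sum_congr rfl fun z _ => hpointwise z,
    Finset.sum_sub_distrib, sum_mul_comp_snd_eq_of_marginal hpx_sum hpy fun y => log (py y),
    sub_self]

end Marginals

theorem club_upper_bound_of_mutual_information
    {X Y : Type*} [Fintype X] [Fintype Y]
    (p : X × Y → ℝ)
    (hp_pos : ∀ z, 0 < p z)
    (hp_sum : ∑ z : X × Y, p z = 1)
    (px : X → ℝ) (hpx : ∀ x, px x = ∑ y : Y, p (x, y))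
    (py : Y → ℝ) (hpy : ∀ y, py y = ∑ x : X, p (x, y))
    (pcond : X → Y → ℝ) (hpcond : ∀ x y, pcond x y = p (x, y) / px x)
    (I : ℝ) (hI : I = ∑ z : X × Y, p z * Real.log (p z / (px z.1 * py z.2)))
    (ICLUB : ℝ)
    (hICLUB : ICLUB = (∑ z : X × Y, p z * Real.log (pcond z.1 z.2)) -
        ∑ z : X × Y, px z.1 * py z.2 * Real.log (pcond z.1 z.2))
    (KL : ℝ)
    (hKL : KL = ∑ z : X × Y, px z.1 * py z.2 * Real.log (px z.1 * py z.2 / p z)) :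
    I ≤ ICLUB ∧ ICLUB - I = KL ∧
      (I = ICLUB ↔ ∀ x y, p (x, y) = px x * py y) := by
  obtain ⟨x₀, y₀⟩ : Nonempty (X × Y) := by
    by_contra h
    simp [not_nonempty_iff.mp h] at hp_sum
  have hpx_pos : ∀ x, 0 < px x := fun x =>
    hpx x ▸ Finset.sum_pos (fun y _ => hp_pos (x, y)) ⟨y₀, Finset.mem_univ _⟩
  have hpy_pos : ∀ y, 0 < py y := fun y =>
    hpy y ▸ Finset.sum_pos (fun x _ => hp_pos (x, y)) ⟨x₀, Finset.mem_univ _⟩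
  have hpx_sum : ∑ x, px x = 1 := by simp_rw [hpx, ← Fintype.sum_prod_type, hp_sum]
  have hq_sum : ∑ z : X × Y, px z.1 * py z.2 = ∑ z, p z := by
    simpa using (sum_mul_comp_snd_eq_of_marginal hpx_sum hpy fun _ => 1).symm
  have hq_nonneg : ∀ z ∈ (Finset.univ : Finset (X × Y)), 0 ≤ px z.1 * py z.2 := fun z _ =>
    (mul_pos (hpx_pos z.1) (hpy_pos z.2)).le
  have hdiff : ICLUB - I = KL := by
    simp only [hICLUB, hI, hKL, hpcond]
    exact club_sub_mutualInfo_eq_kl hp_pos hpx_pos hpy_pos hpx_sum hpy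
  have hKL_nonneg : 0 ≤ KL :=
    hKL ▸ Finset.sum_mul_log_div_nonneg hq_nonneg (fun z _ => hp_pos z) hq_sum
  have hKL_zero : KL = 0 ↔ ∀ x y, p (x, y) = px x * py y := by
    rw [hKL, Finset.sum_mul_log_div_eq_zero_iff hq_nonneg (fun z _ => hp_pos z) hq_sum]
    simp [eq_comm]
  refine ⟨by linarith, hdiff, ?_⟩
  rw [← hKL_zero]
  constructor <;> intro h <;> linarith
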